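/- arXiv:1703.03859 — 2 statements merged into one kernel-verified Lean document; each statement's English description precedes it below -/
import Mathlib

section
/- Suppose sequences x^t, m^t, s^t, u^t, n^t in ℝ^{Ê} satisfy the distributed over-relaxed ADMM recursions: x^{t+1} = A n^t; m^{t+1} = γ x^{t+1} + u^t; s^{t+1} = (1−γ) s^t + B m^{t+1}; u^{t+1} = u^t + γ x^{t+1} + (1−γ) s^t − s^{t+1}; n^{t+1} = s^{t+1} − u^{t+1}, with initial conditions s^0 = S z^0 for some z^0 ∈ ℝ^{V} and B u^0 = 0, and n^0 = s^0 − u^0. Then for every t ≥ 0: n^{t+1} = T_A n^t where T_A = I − γ(A + B − 2BA), and moreover s^t = B n^t and u^t = −(I − B) n^t. -/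
open Matrix BigOperators

noncomputable section

variable {V : Type*} [Fintype V] [DecidableEq V]

/-- The extended index set `Ê = {(e,i) : e ∈ E, i an endpoint of e}`. -/
abbrev Ehat (G : SimpleGraph V) [DecidableRel G.Adj] : Type _ :=
  {p : Sym2 V × V // p.1 ∈ G.edgeSet ∧ p.2 ∈ p.1}

/-- The `|Ê| × |V|` matrix `S`, with `S_{(e,i),j} = 1` iff `j = i`. -/
def Smat (G : SimpleGraph V) [DecidableRel G.Adj] : Matrix (Ehat G) V ℝ :=
  fun p j => if p.val.2 = j then 1 else 0

/-- The `|Ê| × |Ê|` block-diagonal matrix `Q`, whose block for edge `e = (i,j)` acts on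
coordinates `(e,i), (e,j)` as `q_e · [[1,-1],[-1,1]]`. -/
def Qmat (G : SimpleGraph V) [DecidableRel G.Adj] (q : Sym2 V → ℝ) :
    Matrix (Ehat G) (Ehat G) ℝ :=
  fun p p' =>
    if p.val.1 = p'.val.1 then (if p.val.2 = p'.val.2 then q p.val.1 else - q p.val.1) else 0

/-- The element `(e, i)` of `Ê` associated with an edge `e = (i,j)`. -/
def eFst {G : SimpleGraph V} [DecidableRel G.Adj] {i j : V} (h : G.Adj i j) : Ehat G :=
  ⟨(s(i,j), i), ⟨G.mem_edgeSet.mpr h, Sym2.mem_mk_left i j⟩⟩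

/-- The element `(e, j)` of `Ê` associated with an edge `e = (i,j)`. -/
def eSnd {G : SimpleGraph V} [DecidableRel G.Adj] {i j : V} (h : G.Adj i j) : Ehat G :=
  ⟨(s(i,j), j), ⟨G.mem_edgeSet.mpr h, Sym2.mem_mk_right i j⟩⟩

/-- For `(e,i) ∈ Ê` with `e = (i,j)`, the element `(e,j)` given by the other endpoint. -/
def otherE {G : SimpleGraph V} [DecidableRel G.Adj] (p : Ehat G) : Ehat G :=
  ⟨(p.val.1, Sym2.Mem.other' p.prop.2), ⟨p.prop.1, Sym2.other_mem' p.prop.2⟩⟩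

/-- **Linear evolution of distributed over-relaxed ADMM.**
If the five ADMM sequences satisfy the distributed over-relaxed ADMM recursions with
initial conditions `s⁰ = S z⁰`, `B u⁰ = 0` and `n = s - u`, then
`n^{t+1} = T_A n^t` with `T_A = I - γ(A + B - 2BA)`, and moreover `s^t = B n^t`
and `u^t = -(I - B) n^t` for all `t`. -/
theorem admm_linear_evolution
    (G : SimpleGraph V) [DecidableRel G.Adj]
    (hG : ∀ v : V, ∃ w, G.Adj v w)
    (q : Sym2 V → ℝ) (hq : ∀ e ∈ G.edgeSet, 0 < q e)
    (ρ : Ehat G → ℝ) (hρ : ∀ p, 0 < ρ p)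
    (γ : ℝ) (hγ : γ ∈ Set.Ioo (0 : ℝ) 2)
    (x m s u n : ℕ → Ehat G → ℝ) (z0 : V → ℝ) :
    let S := Smat G
    let Q := Qmat G q
    let Dρ := Matrix.diagonal ρ
    let A := (1 + Dρ⁻¹ * Q)⁻¹
    let B := S * (Sᵀ * Dρ * S)⁻¹ * Sᵀ * Dρ
    let TA := 1 - γ • (A + B - (2 : ℝ) • (B * A))
    (∀ t, x (t + 1) = A.mulVec (n t)) →
    (∀ t, m (t + 1) = γ • x (t + 1) + u t) →
    (∀ t, s (t + 1) = (1 - γ) • s t + B.mulVec (m (t + 1))) →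
    (∀ t, u (t + 1) = u t + γ • x (t + 1) + (1 - γ) • s t - s (t + 1)) →
    (∀ t, n t = s t - u t) →
    s 0 = S.mulVec z0 →
    B.mulVec (u 0) = 0 →
    ∀ t : ℕ,
      n (t + 1) = TA.mulVec (n t) ∧
      s t = B.mulVec (n t) ∧
      u t = -((1 - B).mulVec (n t)) := by
  intro S Q Dρ A B TA hx hm hsr hur hn hs0 hu0
  -- abbreviations and basic matrix facts
  set M : Matrix V V ℝ := Sᵀ * Dρ * S with hMdef
  set d : V → ℝ := fun j => ∑ p : Ehat G, if p.val.2 = j then ρ p else 0 with hddef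
  have hSdef : S = Smat G := rfl
  have hDdef : Dρ = Matrix.diagonal ρ := rfl
  have hM : M = Matrix.diagonal d := by
    ext j k
    simp only [hMdef, hSdef, hDdef, Matrix.mul_apply, Matrix.mul_diagonal,
      Matrix.transpose_apply, Smat, Matrix.diagonal_apply, hddef]
    by_cases hjk : j = k
    · subst hjk
      simp only [if_pos rfl]
      refine Finset.sum_congr rfl fun p _ => ?_
      by_cases hp : p.val.2 = j <;> simp [hp]
    · rw [if_neg hjk]
      refine Finset.sum_eq_zero fun p _ => ?_
      by_cases hp : p.val.2 = j
      · have : ¬ p.val.2 = k := fun h => hjk (hp ▸ h)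
        simp [hp, this, hjk]
      · simp [hp]
  have hd : ∀ j, 0 < d j := by
    intro j
    obtain ⟨w, hw⟩ := hG j
    refine Finset.sum_pos' (fun p _ => ?_) ⟨eFst hw, Finset.mem_univ _, ?_⟩
    · split_ifs
      · exact (hρ _).le
      · exact le_refl 0
    · simp [eFst, hρ _]
  have hdet : IsUnit M.det := by
    rw [hM, Matrix.det_diagonal]
    exact isUnit_iff_ne_zero.mpr (Finset.prod_ne_zero_iff.mpr fun j _ => (hd j).ne')
  have hinv : M⁻¹ * M = 1 := Matrix.nonsing_inv_mul M hdet
  have hBdef : B = S * M⁻¹ * Sᵀ * Dρ := rfl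
  have hBS : B * S = S := by
    calc B * S = S * (M⁻¹ * M) := by
          rw [hBdef, hMdef]; simp only [Matrix.mul_assoc]
      _ = S := by rw [hinv, Matrix.mul_one]
  have hBB : B * B = B := by
    have h1 : B * B = (B * S) * (M⁻¹ * (Sᵀ * Dρ)) := by
      rw [hBdef]; simp only [Matrix.mul_assoc]
    rw [h1, hBS, hBdef]; simp only [Matrix.mul_assoc]
  have hBB' : ∀ v : Ehat G → ℝ, B.mulVec (B.mulVec v) = B.mulVec v := by
    intro v; rw [Matrix.mulVec_mulVec, hBB]
  -- key invariant
  have key : ∀ t, B.mulVec (s t) = s t ∧ B.mulVec (u t) = 0 := by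
    intro t
    induction t with
    | zero =>
      refine ⟨?_, hu0⟩
      rw [hs0, Matrix.mulVec_mulVec, hBS]
    | succ t ih =>
      obtain ⟨ihs, ihu⟩ := ih
      have hstep : s (t + 1) = (1 - γ) • s t + B.mulVec (m (t + 1)) := hsr t
      have hBs1 : B.mulVec (s (t + 1)) = s (t + 1) := by
        rw [hstep, Matrix.mulVec_add, Matrix.mulVec_smul, ihs, hBB']
      refine ⟨hBs1, ?_⟩
      have hBm : B.mulVec (m (t + 1)) = γ • B.mulVec (x (t + 1)) := by
        rw [hm t, Matrix.mulVec_add, Matrix.mulVec_smul, ihu, add_zero]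
      rw [hur t, Matrix.mulVec_sub, Matrix.mulVec_add, Matrix.mulVec_add,
        Matrix.mulVec_smul, Matrix.mulVec_smul, ihu, ihs, hBs1, hstep, hBm]
      abel
  -- conclusions
  intro t
  obtain ⟨hks, hku⟩ := key t
  have hnt := hn t
  have hsB : s t = B.mulVec (n t) := by
    rw [hnt, Matrix.mulVec_sub, hks, hku, sub_zero]
  have huB : u t = B.mulVec (n t) - n t := by
    rw [← hsB, hnt]; abel
  refine ⟨?_, hsB, ?_⟩
  · have hs1 : s (t + 1) = (1 - γ) • s t + γ • (B * A).mulVec (n t) := by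
      rw [hsr t, hm t, Matrix.mulVec_add, Matrix.mulVec_smul, hku, add_zero, hx t,
        Matrix.mulVec_mulVec]
    have hTA : TA.mulVec (n t)
        = n t - γ • (A.mulVec (n t) + B.mulVec (n t) - (2:ℝ) • (B * A).mulVec (n t)) := by
      show (1 - γ • (A + B - (2:ℝ) • (B * A))).mulVec (n t) = _
      rw [Matrix.sub_mulVec, Matrix.one_mulVec, Matrix.smul_mulVec,
        Matrix.sub_mulVec, Matrix.add_mulVec, Matrix.smul_mulVec]
    rw [hn (t + 1), hur t, hs1, hTA, hx t, huB, hsB]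
    module
  · rw [Matrix.sub_mulVec, Matrix.one_mulVec, ← hsB, hnt]
    abel
end
end

section
/- Define v_G = (I−D_G)·1 ∈ ℝ^{V} and v_A = (I−D_A)·ρ ∈ ℝ^{Ê}, where D_G and D_A are diagonal matrices with all diagonal entries different from 1. Then v_G and v_A are left eigenvectors with eigenvalue 1 of M_G = (I−D_G)⁻¹(T_G−D_G) and M_A = (I−D_A)⁻¹(T_A−D_A) respectively: v_Gᵀ M_G = v_Gᵀ and v_Aᵀ M_A = v_Aᵀ. -/
/-!
Both identities reduce to `wᵀ T = wᵀ` for the unrelaxed operator, with `w = 1` for `T_G` and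
`w = ρ` for `T_A`: since `I - D` is diagonal and invertible, `vᵀ (I - D)⁻¹ = wᵀ` and
`wᵀ (T - D) = wᵀ - wᵀ D = vᵀ`.

For `T_G` this holds because `1ᵀ Sᵀ = 1ᵀ` and `1ᵀ Q = 0`. For `T_A` it suffices that `ρ` is
left-fixed by `A` and by `B`. Writing `ρᵀ = 1ᵀ D_ρ`, the matrix `I + D_ρ⁻¹ Q` fixes `ρ`, and it is
invertible because `D_ρ + Q` is positive definite (`Q` is positive semidefinite by pairing each
`(e,i)` with `(e,j)`). For `B`, `1ᵀ N = 1ᵀ D_ρ S` with `N = Sᵀ D_ρ S`, so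
`ρᵀ S N⁻¹ Sᵀ D_ρ = 1ᵀ Sᵀ D_ρ = ρᵀ`; `N` is invertible as `S` is injective when no vertex is
isolated.
-/

open Matrix BigOperators

noncomputable section

variable {V : Type*} [Fintype V] [DecidableEq V]

set_option linter.unusedSectionVars false

section LeftFixedVectors

variable {K : Type*} [Field K] {m n : Type*} [Fintype m] [Fintype n] [DecidableEq n]

theorem vecMul_projection_eq {S : Matrix m n K} (hS : S *ᵥ 1 = 1) {D : Matrix m m K}
    (hN : IsUnit (Sᵀ * D * S).det) :
    (1 ᵥ* D) ᵥ* (S * (Sᵀ * D * S)⁻¹ * Sᵀ * D) = 1 ᵥ* D := by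
  have hSt : (1 : n → K) ᵥ* Sᵀ = 1 := by rw [vecMul_transpose, hS]
  have hN1 : (1 : n → K) ᵥ* (Sᵀ * D * S) = 1 ᵥ* (D * S) := by
    rw [Matrix.mul_assoc, ← vecMul_vecMul, hSt]
  calc (1 ᵥ* D) ᵥ* (S * (Sᵀ * D * S)⁻¹ * Sᵀ * D)
      = (1 ᵥ* (D * S)) ᵥ* ((Sᵀ * D * S)⁻¹ * (Sᵀ * D)) := by
        simp only [vecMul_vecMul, Matrix.mul_assoc]
    _ = 1 ᵥ* (Sᵀ * D) := by
        rw [← hN1, vecMul_vecMul, ← Matrix.mul_assoc, mul_nonsing_inv _ hN, Matrix.one_mul]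
    _ = 1 ᵥ* D := by rw [← vecMul_vecMul, hSt]

theorem one_vecMul_transpose_mul_mul_eq_zero {S : Matrix m n K} (hS : S *ᵥ 1 = 1)
    {Q : Matrix m m K} (hQ : 1 ᵥ* Q = 0) : (1 : n → K) ᵥ* (Sᵀ * Q * S) = 0 := by
  rw [← vecMul_vecMul, ← vecMul_vecMul, vecMul_transpose, hS, hQ, zero_vecMul]

variable [DecidableEq m]

theorem vecMul_relaxation_eq_of_vecMul_eq {d : m → K} (hd : ∀ i, d i ≠ 1) {T : Matrix m m K}
    {w : m → K} (hw : w ᵥ* T = w) :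
    ((1 - diagonal d) *ᵥ w) ᵥ* ((1 - diagonal d)⁻¹ * (T - diagonal d)) =
      (1 - diagonal d) *ᵥ w := by
  have hsymm : (1 - diagonal d)ᵀ = 1 - diagonal d := by
    rw [transpose_sub, transpose_one, diagonal_transpose]
  have hdet : IsUnit (1 - diagonal d : Matrix m m K).det := by
    rw [← diagonal_one, diagonal_sub, det_diagonal, isUnit_iff_ne_zero]
    exact Finset.prod_ne_zero_iff.mpr fun i _ => sub_ne_zero.mpr (hd i).symm
  rw [← vecMul_transpose, hsymm, vecMul_vecMul, ← Matrix.mul_assoc, mul_nonsing_inv _ hdet,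
    Matrix.one_mul, vecMul_sub, hw, vecMul_sub, vecMul_one]

theorem vecMul_nonsing_inv_eq_of_vecMul_eq {M : Matrix m m K} (hM : IsUnit M.det) {w : m → K}
    (hw : w ᵥ* M = w) : w ᵥ* M⁻¹ = w := by
  conv_lhs => rw [← hw, vecMul_vecMul, mul_nonsing_inv _ hM, vecMul_one]

theorem vecMul_one_sub_smul_eq {A B : Matrix m m K} {w : m → K} (hA : w ᵥ* A = w)
    (hB : w ᵥ* B = w) (γ : K) : w ᵥ* (1 - γ • (A + B - (2 : K) • (B * A))) = w := by
  rw [vecMul_sub, vecMul_one, vecMul_smul, vecMul_sub, vecMul_add, vecMul_smul,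
    ← vecMul_vecMul, hA, hB, hA]
  module

theorem vecMul_inv_one_add_inv_mul_eq {D : Matrix m m K} (hD : IsUnit D.det) {Q : Matrix m m K}
    (hDQ : IsUnit (D + Q).det) (hQ : 1 ᵥ* Q = 0) :
    (1 ᵥ* D) ᵥ* (1 + D⁻¹ * Q)⁻¹ = 1 ᵥ* D := by
  have hfactor : 1 + D⁻¹ * Q = D⁻¹ * (D + Q) := by
    rw [Matrix.mul_add, nonsing_inv_mul _ hD]
  refine vecMul_nonsing_inv_eq_of_vecMul_eq ?_ ?_
  · rw [hfactor, det_mul]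
    exact (isUnit_nonsing_inv_det D hD).mul hDQ
  · rw [vecMul_add, vecMul_one, vecMul_vecMul, ← Matrix.mul_assoc, mul_nonsing_inv _ hD,
      Matrix.one_mul, hQ, add_zero]

end LeftFixedVectors

theorem Function.Involutive.two_mul_sum_mul_mul_sub_eq {ι R : Type*} [Fintype ι] [CommRing R]
    {σ : ι → ι} (hσ : Function.Involutive σ) {c : ι → R} (hc : ∀ i, c (σ i) = c i)
    (x : ι → R) :
    2 * ∑ i, x i * (c i * (x i - x (σ i))) = ∑ i, c i * (x i - x (σ i)) ^ 2 := by
  set f := fun i => x i * (c i * (x i - x (σ i)))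
  calc 2 * ∑ i, f i = ∑ i, f i + ∑ i, f (σ i) := by
        rw [two_mul]
        exact congrArg (_ + ·) (Equiv.sum_comp hσ.toPerm f).symm
    _ = ∑ i, c i * (x i - x (σ i)) ^ 2 := by
        rw [← Finset.sum_add_distrib]
        refine Finset.sum_congr rfl fun i _ => ?_
        simp only [f, hσ i, hc]
        ring

variable {G : SimpleGraph V} [DecidableRel G.Adj]

theorem otherE_snd_ne (p : Ehat G) : (otherE p).val.2 ≠ p.val.2 := by
  have hne := Sym2.other_ne (G.not_isDiag_of_mem_edgeSet p.prop.1) p.prop.2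
  rwa [Sym2.other_eq_other'] at hne

theorem otherE_ne (p : Ehat G) : otherE p ≠ p := fun h =>
  otherE_snd_ne p (congrArg (fun p : Ehat G => p.val.2) h)

theorem otherE_involutive : Function.Involutive (otherE (G := G)) := fun p =>
  Subtype.ext (Prod.ext rfl (Sym2.other_invol' p.prop.2 (otherE p).prop.2))

theorem eq_or_eq_otherE_of_fst_eq {p p' : Ehat G} (h : p'.val.1 = p.val.1) :
    p' = p ∨ p' = otherE p := by
  have hmem : p'.val.2 ∈ s(p.val.2, (otherE p).val.2) := by
    rw [otherE, Sym2.other_spec', ← h]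
    exact p'.prop.2
  rcases Sym2.mem_iff.mp hmem with h2 | h2
  · exact Or.inl (Subtype.ext (Prod.ext h h2))
  · exact Or.inr (Subtype.ext (Prod.ext h h2))

theorem Qmat_apply (q : Sym2 V → ℝ) (p p' : Ehat G) :
    Qmat G q p p' = if p' = p then q p.val.1 else if p' = otherE p then -q p.val.1 else 0 := by
  unfold Qmat
  by_cases hp : p' = p
  · simp [hp]
  by_cases ho : p' = otherE p
  · subst ho
    rw [if_neg (otherE_ne p), if_pos rfl, if_neg (otherE_snd_ne p).symm]
    exact if_pos rfl
  have hfst : p.val.1 ≠ p'.val.1 := fun h => (eq_or_eq_otherE_of_fst_eq h.symm).elim hp ho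
  simp [hp, ho, hfst]

theorem Smat_mulVec_apply (x : V → ℝ) (p : Ehat G) : (Smat G *ᵥ x) p = x p.val.2 := by
  simp [mulVec, dotProduct, Smat]

theorem Smat_mulVec_injective (hG : ∀ v : V, ∃ w, G.Adj v w) :
    Function.Injective (Smat G).mulVec := by
  intro x y hxy
  funext v
  obtain ⟨w, hvw⟩ := hG v
  have h := congrFun hxy (eFst hvw)
  rwa [Smat_mulVec_apply, Smat_mulVec_apply] at h

theorem Smat_mulVec_one : Smat G *ᵥ 1 = 1 :=
  funext fun p => Smat_mulVec_apply 1 p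

theorem Qmat_mulVec_apply (q : Sym2 V → ℝ) (x : Ehat G → ℝ) (p : Ehat G) :
    (Qmat G q *ᵥ x) p = q p.val.1 * (x p - x (otherE p)) := by
  simp only [mulVec, dotProduct, Qmat_apply]
  rw [Fintype.sum_eq_add p (otherE p) (otherE_ne p).symm]
  · simp only [↓reduceIte, otherE_ne p, neg_mul]
    ring
  · rintro p' ⟨hp, ho⟩
    simp [hp, ho]

theorem Qmat_transpose (q : Sym2 V → ℝ) : (Qmat G q)ᵀ = Qmat G q := by
  ext p p'
  simp only [transpose_apply, Qmat]
  split_ifs <;> simp_all [eq_comm]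

theorem one_vecMul_Qmat (q : Sym2 V → ℝ) : 1 ᵥ* Qmat G q = 0 := by
  rw [← Qmat_transpose, vecMul_transpose]
  funext p
  simp [Qmat_mulVec_apply]

theorem Qmat_posSemidef {q : Sym2 V → ℝ} (hq : ∀ e ∈ G.edgeSet, 0 < q e) :
    (Qmat G q).PosSemidef := by
  refine .of_dotProduct_mulVec_nonneg (Qmat_transpose q) fun x => ?_
  have hsum := otherE_involutive.two_mul_sum_mul_mul_sub_eq (c := fun p : Ehat G => q p.val.1)
    (fun _ => rfl) x
  have hnonneg : 0 ≤ ∑ p : Ehat G, q p.val.1 * (x p - x (otherE p)) ^ 2 :=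
    Finset.sum_nonneg fun p _ => mul_nonneg (hq _ p.prop.1).le (sq_nonneg _)
  simp only [star_trivial, dotProduct, Qmat_mulVec_apply]
  linarith

theorem Smat_transpose_mul_diagonal_mul_posDef (hG : ∀ v : V, ∃ w, G.Adj v w) {ρ : Ehat G → ℝ}
    (hρ : ∀ p, 0 < ρ p) : ((Smat G)ᵀ * diagonal ρ * Smat G).PosDef := by
  simpa only [conjTranspose_eq_transpose_of_trivial] using
    (PosDef.diagonal hρ).conjTranspose_mul_mul_same (Smat_mulVec_injective hG)

theorem vG_vA_left_eigenvectors_general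
    (G : SimpleGraph V) [DecidableRel G.Adj]
    (hG : ∀ v : V, ∃ w, G.Adj v w)
    (q : Sym2 V → ℝ) (hq : ∀ e ∈ G.edgeSet, 0 < q e)
    (ρ : Ehat G → ℝ) (hρ : ∀ p, 0 < ρ p)
    (γ : ℝ) (α : ℝ)
    (DG : V → ℝ) (hDG : ∀ b, DG b ≠ 1)
    (DA : Ehat G → ℝ) (hDA : ∀ p, DA p ≠ 1) :
    let S := Smat G
    let Q := Qmat G q
    let Dρ := Matrix.diagonal ρ
    let A := (1 + Dρ⁻¹ * Q)⁻¹
    let B := S * (Sᵀ * Dρ * S)⁻¹ * Sᵀ * Dρ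
    let TA := 1 - γ • (A + B - (2 : ℝ) • (B * A))
    let TG := (1 : Matrix V V ℝ) - α • (Sᵀ * Q * S)
    let MG := (1 - Matrix.diagonal DG)⁻¹ * (TG - Matrix.diagonal DG)
    let MA := (1 - Matrix.diagonal DA)⁻¹ * (TA - Matrix.diagonal DA)
    let vG := (1 - Matrix.diagonal DG).mulVec (fun _ => 1)
    let vA := (1 - Matrix.diagonal DA).mulVec ρ
    Matrix.vecMul vG MG = vG ∧ Matrix.vecMul vA MA = vA := by
  intro S Q Dρ A B TA TG MG MA vG vA
  have hQ : 1 ᵥ* Q = 0 := one_vecMul_Qmat q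
  have hρ_eq : 1 ᵥ* Dρ = ρ := funext fun p => by simp [Dρ, vecMul_diagonal]
  have hDρ : Dρ.PosDef := .diagonal hρ
  have hA : ρ ᵥ* A = ρ := hρ_eq ▸ vecMul_inv_one_add_inv_mul_eq
    ((isUnit_iff_isUnit_det _).mp hDρ.isUnit)
    ((isUnit_iff_isUnit_det _).mp (hDρ.add_posSemidef (Qmat_posSemidef hq)).isUnit) hQ
  have hB : ρ ᵥ* B = ρ := hρ_eq ▸ vecMul_projection_eq Smat_mulVec_one
    ((isUnit_iff_isUnit_det _).mp (Smat_transpose_mul_diagonal_mul_posDef hG hρ).isUnit)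
  have hTG : (1 : V → ℝ) ᵥ* TG = 1 := by
    rw [vecMul_sub, vecMul_one, vecMul_smul,
      one_vecMul_transpose_mul_mul_eq_zero Smat_mulVec_one hQ, smul_zero, sub_zero]
  exact ⟨vecMul_relaxation_eq_of_vecMul_eq hDG hTG,
    vecMul_relaxation_eq_of_vecMul_eq hDA (vecMul_one_sub_smul_eq hA hB γ)⟩

/-- **`v_G` and `v_A` are left eigenvectors with eigenvalue 1.**
With `v_G = (I - D_G)·1` and `v_A = (I - D_A)·ρ`, where `D_G, D_A` are diagonal with all
diagonal entries different from `1`, one has `v_Gᵀ M_G = v_Gᵀ` and `v_Aᵀ M_A = v_Aᵀ`. -/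
theorem vG_vA_left_eigenvectors
    (G : SimpleGraph V) [DecidableRel G.Adj]
    (hG : ∀ v : V, ∃ w, G.Adj v w)
    (q : Sym2 V → ℝ) (hq : ∀ e ∈ G.edgeSet, 0 < q e)
    (ρ : Ehat G → ℝ) (hρ : ∀ p, 0 < ρ p)
    (γ : ℝ) (hγ : γ ∈ Set.Ioo (0 : ℝ) 2) (α : ℝ)
    (DG : V → ℝ) (hDG : ∀ b, DG b ≠ 1)
    (DA : Ehat G → ℝ) (hDA : ∀ p, DA p ≠ 1) :
    let S := Smat G
    let Q := Qmat G q
    let Dρ := Matrix.diagonal ρ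
    let A := (1 + Dρ⁻¹ * Q)⁻¹
    let B := S * (Sᵀ * Dρ * S)⁻¹ * Sᵀ * Dρ
    let TA := 1 - γ • (A + B - (2 : ℝ) • (B * A))
    let TG := (1 : Matrix V V ℝ) - α • (Sᵀ * Q * S)
    let MG := (1 - Matrix.diagonal DG)⁻¹ * (TG - Matrix.diagonal DG)
    let MA := (1 - Matrix.diagonal DA)⁻¹ * (TA - Matrix.diagonal DA)
    let vG := (1 - Matrix.diagonal DG).mulVec (fun _ => 1)
    let vA := (1 - Matrix.diagonal DA).mulVec ρ
    Matrix.vecMul vG MG = vG ∧ Matrix.vecMul vA MA = vA :=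
  vG_vA_left_eigenvectors_general G hG q hq ρ hρ γ α DG hDG DA hDA
end
end
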